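/- Let f^j_s : Z_2 → Z_2 (0 ≤ s, j ≤ m−1) be compatible ergodic functions and g^j_s : Z_2 → Z_2 (0 ≤ s < j ≤ m−1) be compatible measure-preserving functions. Then the m-variate mapping H^B with coordinates h^t(x^0,...,x^{m-1}) = x^t ⊕ ((⋀_{s=0}^{t-1} g^t_s(x^s)) ∧ (⋀_{r=0}^{m-1} (f^t_r(x^r) ⊕ x^r))), t = 0,...,m−1, is compatible and ergodic: for every n ≥ 1 it induces on (Z/2^n Z)^m a permutation with a single cycle of length 2^{mn}. -/

import Mathlib

open scoped BigOperators

/-- The `j`-th binary digit of a 2-adic integer, as an element of `ZMod 2`. -/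
noncomputable def bit2 (j : ℕ) (x : ℤ_[2]) : ZMod 2 := ((x.appr (j+1) / 2^j : ℕ) : ZMod 2)

/-- Compatibility = 1-Lipschitz w.r.t. the 2-adic metric. -/
def Compatible (f : ℤ_[2] → ℤ_[2]) : Prop := ∀ x y : ℤ_[2], ‖f x - f y‖ ≤ ‖x - y‖

/-- Reduction of a 2-adic integer modulo `2^n`. -/
noncomputable def padMod (n : ℕ) (x : ℤ_[2]) : ZMod (2^n) := (x.appr n : ZMod (2^n))

/-- The map induced by `f : ℤ₂ → ℤ₂` on `ZMod (2^n)` (via canonical lifts). -/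
noncomputable def inducedMap (n : ℕ) (f : ℤ_[2] → ℤ_[2]) : ZMod (2^n) → ZMod (2^n) :=
  fun a => padMod n (f ((a.val : ℕ) : ℤ_[2]))

/-- A self-map of a set is a single cycle (transitive on points). -/
def IsSingleCycle {α : Type*} (g : α → α) : Prop := ∀ a b : α, ∃ k : ℕ, g^[k] a = b

/-- Measure preservation: `f` induces a bijection modulo `2^n` for every `n`. -/
def MeasurePreservingZ (f : ℤ_[2] → ℤ_[2]) : Prop := ∀ n : ℕ, Function.Bijective (inducedMap n f)

/-- Ergodicity: `f` induces a single-cycle permutation modulo `2^n` for every `n`. -/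
def ErgodicZ (f : ℤ_[2] → ℤ_[2]) : Prop := ∀ n : ℕ, IsSingleCycle (inducedMap n f)

/-- Induced map modulo `2^n` of an `m`-variate map on `(ℤ₂)^m`. -/
noncomputable def inducedMapM (m n : ℕ) (G : (Fin m → ℤ_[2]) → Fin m → ℤ_[2]) :
    (Fin m → ZMod (2^n)) → Fin m → ZMod (2^n) :=
  fun a j => padMod n (G (fun i => (((a i).val : ℕ) : ℤ_[2])) j)

/-- Coordinatewise compatibility of an `m`-variate map. -/
def CompatibleM (m : ℕ) (G : (Fin m → ℤ_[2]) → Fin m → ℤ_[2]) : Prop :=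
  ∀ (n : ℕ) (x y : Fin m → ℤ_[2]), (∀ i, padMod n (x i) = padMod n (y i)) →
    ∀ j, padMod n (G x j) = padMod n (G y j)

/-- Ergodicity of an `m`-variate map: single cycle modulo `2^n` for all `n`. -/
def ErgodicM (m : ℕ) (G : (Fin m → ℤ_[2]) → Fin m → ℤ_[2]) : Prop :=
  ∀ n : ℕ, IsSingleCycle (inducedMapM m n G)

/-- The 2-adic integer with prescribed binary digits. -/
noncomputable def ofBits (b : ℕ → ZMod 2) : ℤ_[2] := ∑' i : ℕ, ((b i).val : ℤ_[2]) * 2^i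

/-- Bitwise XOR of 2-adic integers. -/
noncomputable def xor2 (x y : ℤ_[2]) : ℤ_[2] := ofBits (fun i => bit2 i x + bit2 i y)

/-- Bitwise AND of 2-adic integers. -/
noncomputable def and2 (x y : ℤ_[2]) : ℤ_[2] := ofBits (fun i => bit2 i x * bit2 i y)

/-- Bitwise AND of a list, the empty AND being `-1` (the all-ones string). -/
noncomputable def andL (l : List ℤ_[2]) : ℤ_[2] := l.foldr and2 (-1)

/-!
Write `δₙ(x)` for the `n`-th binary digit. If a compatible `f` is bijective modulo `2^(n+1)`, then
`δₙ(f x) = δₙ(x) + φ(x mod 2^n)` for some `φ : ZMod (2^n) → ZMod 2`, so modulo `2^(n+1)` the map `f`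
is the skew product `(a, e) ↦ (f a, e + φ a)` over `f` modulo `2^n`. Over a single cycle such a
skew product is a single cycle exactly when `∑ φ = 1`; in particular this parity condition holds
for every ergodic compatible `f`.

For the `m`-variate map the same decomposition exhibits the map modulo `2^(n+1)` as a triangular
skew product over the map modulo `2^n`: the new digit of coordinate `t` is flipped by
`F_t(a) ∏_{s<t} (c_{t,s}(a) + w_s)`, where `F_t(a) = ∏_r φ^t_r(a_r)` comes from the ergodic `f^t_r`
and `c_{t,s}` from the measure-preserving `g^t_s`. Adjoining the new digits one coordinate at a
time, each step is a skew product whose cocycle sums to `∑_a F_t(a) = ∏_r ∑ φ^t_r = 1`, so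
ergodicity passes from `n` to `n + 1`.
-/

open Finset Function

section Digits

variable {n : ℕ} {x y : ℤ_[2]}

lemma padMod_eq_toZModPow (n : ℕ) : padMod n = PadicInt.toZModPow n := rfl

lemma appr_eq_val_padMod (n : ℕ) (x : ℤ_[2]) : x.appr n = (padMod n x).val := by
  rw [padMod, ZMod.val_natCast, Nat.mod_eq_of_lt (x.appr_lt n)]

lemma padMod_eq_iff_appr_eq : padMod n x = padMod n y ↔ x.appr n = y.appr n := by
  rw [appr_eq_val_padMod, appr_eq_val_padMod, (ZMod.val_injective _).eq_iff]

lemma appr_succ_mod_two_pow (n : ℕ) (x : ℤ_[2]) : x.appr (n + 1) % 2 ^ n = x.appr n := by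
  have h : x.appr n ≡ x.appr (n + 1) [MOD 2 ^ n] :=
    (Nat.modEq_iff_dvd' (x.appr_mono n.le_succ)).2 (x.dvd_appr_sub_appr n (n + 1) n.le_succ)
  exact (Eq.symm h).trans (Nat.mod_eq_of_lt (x.appr_lt n))

lemma val_bit2 (n : ℕ) (x : ℤ_[2]) : (bit2 n x).val = x.appr (n + 1) / 2 ^ n := by
  have h : x.appr (n + 1) / 2 ^ n < 2 :=
    Nat.div_lt_of_lt_mul (by simpa [pow_succ, mul_comm] using x.appr_lt (n + 1))
  rw [bit2, ZMod.val_natCast, Nat.mod_eq_of_lt h]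

lemma padMod_succ_eq_iff :
    padMod (n + 1) x = padMod (n + 1) y ↔ padMod n x = padMod n y ∧ bit2 n x = bit2 n y := by
  rw [padMod_eq_iff_appr_eq, padMod_eq_iff_appr_eq, ← (ZMod.val_injective _).eq_iff, val_bit2,
    val_bit2, ← appr_succ_mod_two_pow n x, ← appr_succ_mod_two_pow n y]
  refine ⟨fun h => by rw [h]; exact ⟨rfl, rfl⟩, fun ⟨hmod, hdiv⟩ => ?_⟩
  rw [← Nat.mod_add_div (x.appr (n + 1)) (2 ^ n), ← Nat.mod_add_div (y.appr (n + 1)) (2 ^ n),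
    hmod, hdiv]

lemma padMod_eq_iff_forall_bit2 : padMod n x = padMod n y ↔ ∀ j < n, bit2 j x = bit2 j y := by
  induction n with
  | zero => simpa using Subsingleton.elim (α := ZMod 1) _ _
  | succ n ih => rw [padMod_succ_eq_iff, ih, Nat.forall_lt_succ_right]

lemma padMod_natCast (n k : ℕ) : padMod n k = k := by
  rw [padMod_eq_toZModPow, map_natCast]

lemma padMod_val (a : ZMod (2 ^ n)) : padMod n a.val = a := by
  rw [padMod_natCast, ZMod.natCast_zmod_val]

lemma bit2_natCast (j k : ℕ) : bit2 j (k : ℤ_[2]) = (k / 2 ^ j : ℕ) := by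
  rw [bit2, appr_eq_val_padMod, padMod_natCast, ZMod.val_natCast, pow_succ,
    Nat.mod_mul_right_div_self, ZMod.natCast_mod]

lemma bit2_val_eq_zero (a : ZMod (2 ^ n)) : bit2 n a.val = 0 := by
  rw [bit2_natCast, Nat.div_eq_of_lt a.val_lt, Nat.cast_zero]

lemma bit2_congr (h : padMod (n + 1) x = padMod (n + 1) y) : bit2 n x = bit2 n y :=
  (padMod_succ_eq_iff.1 h).2

lemma bit2_neg_one (j : ℕ) : bit2 j (-1 : ℤ_[2]) = 1 := by
  have hpos : 1 ≤ 2 ^ (j + 1) := Nat.one_le_two_pow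
  have h : padMod (j + 1) (-1) = padMod (j + 1) ((2 ^ (j + 1) - 1 : ℕ) : ℤ_[2]) := by
    rw [padMod_natCast, Nat.cast_sub hpos, ZMod.natCast_self, padMod_eq_toZModPow, map_neg,
      map_one, Nat.cast_one, zero_sub]
  have h1 : 1 ≤ 2 ^ j := Nat.one_le_two_pow
  have hdiv : (2 ^ (j + 1) - 1) / 2 ^ j = 1 := by
    rw [pow_succ]; exact Nat.div_eq_of_lt_le (by omega) (by omega)
  rw [bit2_congr h, bit2_natCast, hdiv, Nat.cast_one]

lemma summable_ofBits (b : ℕ → ZMod 2) : Summable fun i => ((b i).val : ℤ_[2]) * 2 ^ i := by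
  refine NonarchimedeanAddGroup.summable_of_tendsto_cofinite_zero ?_
  rw [Nat.cofinite_eq_atTop]
  refine squeeze_zero_norm (a := fun i => (2⁻¹ : ℝ) ^ i) (fun i => ?_)
    (tendsto_pow_atTop_nhds_zero_of_lt_one (by norm_num) (by norm_num))
  have h2 : ‖(2 : ℤ_[2])‖ = 2⁻¹ := by simpa using PadicInt.norm_p (p := 2)
  rw [norm_mul, norm_pow, h2]
  exact mul_le_of_le_one_left (by positivity) (PadicInt.norm_le_one _)

lemma ofBits_eq_sum_add (b : ℕ → ZMod 2) (n : ℕ) :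
    ofBits b = ((∑ i ∈ range n, (b i).val * 2 ^ i : ℕ) : ℤ_[2]) + 2 ^ n * ofBits (b <| · + n) := by
  rw [ofBits, ofBits, ← (summable_ofBits b).sum_add_tsum_nat_add n,
    ← (summable_ofBits (b <| · + n)).tsum_mul_left]
  push_cast
  congr 1
  exact tsum_congr fun i => by ring

lemma sum_bits_lt (b : ℕ → ZMod 2) (n : ℕ) : ∑ i ∈ range n, (b i).val * 2 ^ i < 2 ^ n := by
  induction n with
  | zero => simp
  | succ n ih =>
    have hb : (b n).val ≤ 1 := Nat.lt_succ_iff.1 (ZMod.val_lt _)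
    have := Nat.mul_le_mul_right (2 ^ n) hb
    rw [sum_range_succ, pow_succ]
    omega

lemma bit2_ofBits (j : ℕ) (b : ℕ → ZMod 2) : bit2 j (ofBits b) = b j := by
  have h : padMod (j + 1) (ofBits b)
      = padMod (j + 1) ((∑ i ∈ range (j + 1), (b i).val * 2 ^ i : ℕ) : ℤ_[2]) := by
    have h2 : (2 : ZMod (2 ^ (j + 1))) ^ (j + 1) = 0 := by exact_mod_cast ZMod.natCast_self _
    rw [ofBits_eq_sum_add b (j + 1), padMod_eq_toZModPow, map_add, map_mul, map_pow, map_ofNat,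
      h2, zero_mul, add_zero]
  rw [bit2_congr h, bit2_natCast, sum_range_succ, Nat.add_mul_div_right _ _ (by positivity),
    Nat.div_eq_of_lt (sum_bits_lt b j), zero_add, ZMod.natCast_zmod_val]

lemma bit2_xor2 (j : ℕ) (x y : ℤ_[2]) : bit2 j (xor2 x y) = bit2 j x + bit2 j y :=
  bit2_ofBits j _

lemma bit2_and2 (j : ℕ) (x y : ℤ_[2]) : bit2 j (and2 x y) = bit2 j x * bit2 j y :=
  bit2_ofBits j _

lemma bit2_andL (j : ℕ) (l : List ℤ_[2]) : bit2 j (andL l) = (l.map (bit2 j)).prod := by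
  induction l with
  | nil => exact bit2_neg_one j
  | cons a l ih => rw [andL, List.foldr_cons, ← andL, bit2_and2, ih, List.map_cons, List.prod_cons]

end Digits

lemma eq_add_one_of_ne_zmod_two {a b : ZMod 2} (h : a ≠ b) : a = b + 1 := by
  decide +revert

namespace IsSingleCycle

variable {α β : Type*} {g : α → α}

lemma surjective (h : IsSingleCycle g) : Surjective g := fun b => by
  obtain ⟨k, hk⟩ := h (g b) b
  exact ⟨g^[k] b, by rwa [← iterate_succ_apply' g k b, iterate_succ_apply]⟩

lemma injective [Finite α] (h : IsSingleCycle g) : Injective g :=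
  Finite.injective_iff_surjective.2 h.surjective

lemma of_semiconj {T : α → α} {T' : β → β} {φ : α → β} (hφ : Injective φ) (hs : Semiconj φ T T')
    (h : IsSingleCycle T') : IsSingleCycle T := fun a b => by
  obtain ⟨k, hk⟩ := h (φ a) (φ b)
  exact ⟨k, hφ (by rw [(hs.iterate_right k) a, hk])⟩

lemma semiconj {T : α → α} {T' : β → β} {φ : α → β} (h : IsSingleCycle T) (hφ : Surjective φ)
    (hs : Semiconj φ T T') : IsSingleCycle T' := fun a b => by
  obtain ⟨a, rfl⟩ := hφ a
  obtain ⟨b, rfl⟩ := hφ b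
  obtain ⟨k, hk⟩ := h a b
  exact ⟨k, by rw [← (hs.iterate_right k) a, hk]⟩

variable [Fintype α]

lemma minimalPeriod_eq_card (h : IsSingleCycle g) (a : α) :
    minimalPeriod g a = Fintype.card α := by
  obtain ⟨k, hk⟩ := h (g a) a
  have hpos : 0 < minimalPeriod g a :=
    minimalPeriod_pos_of_mem_periodicPts (mk_mem_periodicPts k.succ_pos hk)
  have hsurj : Surjective fun i : Fin (minimalPeriod g a) => g^[i] a := fun b => by
    obtain ⟨k, rfl⟩ := h a b
    exact ⟨⟨k % _, Nat.mod_lt _ hpos⟩, iterate_mod_minimalPeriod_eq⟩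
  exact minimalPeriod_le_card.antisymm (by simpa using Fintype.card_le_of_surjective _ hsurj)

lemma iterate_card (h : IsSingleCycle g) (a : α) : g^[Fintype.card α] a = a := by
  rw [← h.minimalPeriod_eq_card a]
  exact iterate_minimalPeriod

lemma sum_range_card {M : Type*} [AddCommMonoid M] (h : IsSingleCycle g) (ρ : α → M) (a : α) :
    ∑ i ∈ range (Fintype.card α), ρ (g^[i] a) = ∑ b, ρ b := by
  classical
  have hinj : Set.InjOn (g^[·] a) (range (Fintype.card α)) := by
    simpa [← h.minimalPeriod_eq_card a] using iterate_injOn_Iio_minimalPeriod (f := g) (x := a)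
  rw [← sum_image hinj]
  refine sum_congr (eq_univ_of_card _ ?_) fun _ _ => rfl
  rw [card_image_of_injOn hinj, card_range]

end IsSingleCycle

section SkewProduct

variable {α : Type*} {g : α → α} {ρ : α → ZMod 2}

def skewProduct (g : α → α) (ρ : α → ZMod 2) (p : α × ZMod 2) : α × ZMod 2 :=
  (g p.1, p.2 + ρ p.1)

lemma skewProduct_iterate (k : ℕ) (p : α × ZMod 2) :
    (skewProduct g ρ)^[k] p = (g^[k] p.1, p.2 + ∑ i ∈ range k, ρ (g^[i] p.1)) := by
  induction k with
  | zero => simp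
  | succ k ih =>
    rw [iterate_succ_apply', ih, skewProduct, iterate_succ_apply', sum_range_succ, add_assoc]

variable [Fintype α]

lemma IsSingleCycle.skewProduct_iterate_card (hg : IsSingleCycle g) (p : α × ZMod 2) :
    (skewProduct g ρ)^[Fintype.card α] p = (p.1, p.2 + ∑ a, ρ a) := by
  rw [skewProduct_iterate, hg.iterate_card, hg.sum_range_card]

/-- Once around the base cycle the fibre coordinate moves by `∑ ρ`, so the two fibres join into
a single cycle exactly when that sum is odd. -/
theorem IsSingleCycle.isSingleCycle_skewProduct (hg : IsSingleCycle g) (hρ : ∑ a, ρ a = 1) :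
    IsSingleCycle (skewProduct g ρ) := fun p q => by
  obtain ⟨k, hk⟩ := hg p.1 q.1
  by_cases hfibre : p.2 + ∑ i ∈ range k, ρ (g^[i] p.1) = q.2
  · exact ⟨k, by rw [skewProduct_iterate, hk, hfibre]⟩
  · refine ⟨k + Fintype.card α, ?_⟩
    rw [iterate_add_apply, hg.skewProduct_iterate_card, hρ, skewProduct_iterate]
    refine Prod.ext hk ?_
    simp only
    rw [eq_add_one_of_ne_zmod_two (Ne.symm hfibre)]
    ring

theorem IsSingleCycle.sum_eq_one_of_isSingleCycle_skewProduct [Nonempty α] (hg : IsSingleCycle g)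
    (h : IsSingleCycle (skewProduct g ρ)) : ∑ a, ρ a = 1 := by
  by_contra hρ
  obtain ⟨a⟩ := ‹Nonempty α›
  have hper : IsPeriodicPt (skewProduct g ρ) (Fintype.card α) (a, 0) := by
    rw [IsPeriodicPt, IsFixedPt, hg.skewProduct_iterate_card, eq_add_one_of_ne_zmod_two hρ]
    rfl
  have hle := hper.minimalPeriod_le Fintype.card_pos
  rw [h.minimalPeriod_eq_card, Fintype.card_prod, ZMod.card] at hle
  have := Fintype.card_pos (α := α)
  omega

end SkewProduct

section TriangularSkew

variable {α : Type*} {g : α → α} {m : ℕ}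

def triangularSkew (g : α → α) (F : Fin m → α → ZMod 2) (c : Fin m → Fin m → α → ZMod 2)
    (p : α × (Fin m → ZMod 2)) : α × (Fin m → ZMod 2) :=
  (g p.1, fun t => p.2 t + F t p.1 * ∏ s < t, (c t s p.1 + p.2 s))

lemma sum_pi_prod_add_eq_one {ι : Type*} [Fintype ι] [DecidableEq ι] (c : ι → ZMod 2) :
    ∑ w : ι → ZMod 2, ∏ s, (c s + w s) = 1 := by
  rw [← Fintype.prod_sum]
  exact prod_eq_one fun s _ => by generalize c s = e; revert e; decide

/-- Adding the coordinates one at a time, each step is a skew product whose cocycle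
`F t a * ∏_{s<t} (c t s a + w s)` sums to `∑ a, F t a = 1`. -/
theorem IsSingleCycle.isSingleCycle_triangularSkew [Fintype α] (hg : IsSingleCycle g)
    (F : Fin m → α → ZMod 2) (c : Fin m → Fin m → α → ZMod 2) (hF : ∀ t, ∑ a, F t a = 1) :
    IsSingleCycle (triangularSkew g F c) := by
  induction m with
  | zero =>
    exact hg.of_semiconj (φ := fun p : α × (Fin 0 → ZMod 2) => p.1)
      (fun p q h => Prod.ext h (Subsingleton.elim _ _)) fun _ => rfl
  | succ m ih =>
    let ρ : α × (Fin m → ZMod 2) → ZMod 2 :=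
      fun p => F (Fin.last m) p.1 * ∏ s, (c (Fin.last m) s.castSucc p.1 + p.2 s)
    have hρ : ∑ p, ρ p = 1 := by
      simp only [ρ, Fintype.sum_prod_type, ← mul_sum, sum_pi_prod_add_eq_one, mul_one]
      exact hF _
    refine ((ih (fun t => F t.castSucc) (fun t s => c t.castSucc s.castSucc)
      fun t => hF _).isSingleCycle_skewProduct hρ).of_semiconj
      (φ := fun p => ((p.1, Fin.init p.2), p.2 (Fin.last m))) (fun p q h => ?_) fun p => ?_
    · simp only [Prod.mk.injEq] at h
      rw [Prod.ext_iff, ← Fin.snoc_init_self p.2, ← Fin.snoc_init_self q.2, h.1.2, h.2]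
      exact ⟨h.1.1, rfl⟩
    · simp only [triangularSkew, skewProduct, ρ, Fin.Iio_last_eq_map, prod_map,
        Fin.coe_castSuccEmb]
      congr with t
      simp only [Fin.init, Fin.prod_Iio_castSucc]

end TriangularSkew

namespace Compatible

variable {f : ℤ_[2] → ℤ_[2]} {n : ℕ}

lemma padMod_congr (hf : Compatible f) {x y : ℤ_[2]} (h : padMod n x = padMod n y) :
    padMod n (f x) = padMod n (f y) := by
  rw [padMod_eq_toZModPow, ← sub_eq_zero, ← map_sub, ← RingHom.mem_ker, PadicInt.ker_toZModPow,
    ← PadicInt.norm_le_pow_iff_mem_span_pow] at h ⊢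
  exact (hf x y).trans h

lemma inducedMap_padMod (hf : Compatible f) (x : ℤ_[2]) :
    inducedMap n f (padMod n x) = padMod n (f x) :=
  hf.padMod_congr (padMod_val _)

lemma bit2_apply (hf : Compatible f) (hinj : Injective (inducedMap (n + 1) f)) (x : ℤ_[2]) :
    bit2 n (f x) = bit2 n x + bit2 n (f (padMod n x).val) := by
  set y : ℤ_[2] := ((padMod n x).val : ℤ_[2])
  have hxy : padMod n x = padMod n y := (padMod_val _).symm
  by_cases h : padMod (n + 1) x = padMod (n + 1) y
  · rw [bit2_congr (hf.padMod_congr h), bit2_congr h, bit2_val_eq_zero, zero_add]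
  · have hx : bit2 n x ≠ bit2 n y := fun hb => h (padMod_succ_eq_iff.2 ⟨hxy, hb⟩)
    have hfx : bit2 n (f x) ≠ bit2 n (f y) := fun hb => h <| hinj <| by
      rw [hf.inducedMap_padMod, hf.inducedMap_padMod]
      exact padMod_succ_eq_iff.2 ⟨hf.padMod_congr hxy, hb⟩
    rw [eq_add_one_of_ne_zmod_two hfx, eq_add_one_of_ne_zmod_two hx, bit2_val_eq_zero]
    ring

end Compatible

section LastDigit

variable {n : ℕ}

noncomputable def splitLastDigit (n : ℕ) (a : ZMod (2 ^ (n + 1))) : ZMod (2 ^ n) × ZMod 2 :=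
  (padMod n a.val, bit2 n a.val)

lemma splitLastDigit_padMod (x : ℤ_[2]) :
    splitLastDigit n (padMod (n + 1) x) = (padMod n x, bit2 n x) :=
  Prod.ext_iff.2 (padMod_succ_eq_iff.1 (padMod_val _))

lemma splitLastDigit_bijective : Bijective (splitLastDigit n) := by
  refine (Fintype.bijective_iff_injective_and_card _).2 ⟨fun a b h => ?_, by simp [pow_succ]⟩
  rw [← padMod_val a, ← padMod_val b]
  exact padMod_succ_eq_iff.2 (Prod.ext_iff.1 h)

lemma Compatible.semiconj_splitLastDigit {f : ℤ_[2] → ℤ_[2]} (hf : Compatible f)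
    (hinj : Injective (inducedMap (n + 1) f)) :
    Semiconj (splitLastDigit n) (inducedMap (n + 1) f)
      (skewProduct (inducedMap n f) fun a => bit2 n (f a.val)) := fun a => by
  rw [inducedMap, splitLastDigit_padMod, hf.bit2_apply hinj, splitLastDigit, skewProduct,
    hf.inducedMap_padMod]

theorem Compatible.sum_bit2_eq_one {f : ℤ_[2] → ℤ_[2]} (hf : Compatible f)
    (hn : IsSingleCycle (inducedMap n f)) (hn1 : IsSingleCycle (inducedMap (n + 1) f)) :
    ∑ a : ZMod (2 ^ n), bit2 n (f a.val) = 1 :=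
  hn.sum_eq_one_of_isSingleCycle_skewProduct <|
    hn1.semiconj splitLastDigit_bijective.2 (hf.semiconj_splitLastDigit hn1.injective)

end LastDigit

section TriangularMap

variable {m : ℕ} {f g : Fin m → Fin m → ℤ_[2] → ℤ_[2]}

noncomputable def triangularMap (f g : Fin m → Fin m → ℤ_[2] → ℤ_[2]) (x : Fin m → ℤ_[2])
    (t : Fin m) : ℤ_[2] :=
  xor2 (x t)
    (and2 (andL (((List.finRange m).filter (fun s => s < t)).map (fun s => g t s (x s))))
      (andL ((List.finRange m).map (fun r => xor2 (f t r (x r)) (x r)))))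

lemma prod_map_filter_lt_finRange {M : Type*} [CommMonoid M] (h : Fin m → M) (t : Fin m) :
    (((List.finRange m).filter (fun s => s < t)).map h).prod = ∏ s < t, h s := by
  rw [← List.prod_toFinset h ((List.nodup_finRange m).filter _)]
  congr
  ext s
  simp

lemma bit2_triangularMap (j : ℕ) (x : Fin m → ℤ_[2]) (t : Fin m) :
    bit2 j (triangularMap f g x t) = bit2 j (x t)
      + (∏ s < t, bit2 j (g t s (x s))) * ∏ r, (bit2 j (f t r (x r)) + bit2 j (x r)) := by
  simp only [triangularMap, bit2_xor2, bit2_and2, bit2_andL, List.map_map, comp_def,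
    prod_map_filter_lt_finRange, Fin.prod_univ_def]

theorem compatibleM_triangularMap (hf : ∀ t r, Compatible (f t r))
    (hg : ∀ t s, s < t → Compatible (g t s)) : CompatibleM m (triangularMap f g) := by
  intro n x y hxy t
  rw [padMod_eq_iff_forall_bit2]
  intro j hj
  have bit2_eq {u v : ℤ_[2]} (h : padMod n u = padMod n v) : bit2 j u = bit2 j v :=
    padMod_eq_iff_forall_bit2.1 h j hj
  simp only [bit2_triangularMap, bit2_eq (hxy _), bit2_eq ((hf t _).padMod_congr (hxy _))]
  congr 2
  exact prod_congr rfl fun s hs => bit2_eq ((hg t s (mem_Iio.1 hs)).padMod_congr (hxy s))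

lemma semiconj_splitLastDigit_triangularMap {n : ℕ}
    (hf : ∀ t r, Compatible (f t r) ∧ Injective (inducedMap (n + 1) (f t r)))
    (hg : ∀ t s, s < t → Compatible (g t s) ∧ Injective (inducedMap (n + 1) (g t s))) :
    Semiconj (fun x => (fun i => (splitLastDigit n (x i)).1, fun i => (splitLastDigit n (x i)).2))
      (inducedMapM m (n + 1) (triangularMap f g))
      (triangularSkew (inducedMapM m n (triangularMap f g))
        (fun t a => ∏ r, bit2 n (f t r (a r).val)) (fun t s a => bit2 n (g t s (a s).val))) := by
  intro x
  have hH := compatibleM_triangularMap (fun t r => (hf t r).1) (fun t s hst => (hg t s hst).1)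
  simp only [inducedMapM, splitLastDigit_padMod]
  simp only [triangularSkew, splitLastDigit]
  refine Prod.ext (funext fun i => hH n _ _ (fun i => (padMod_val _).symm) i) (funext fun t => ?_)
  simp only [bit2_triangularMap, mul_comm (∏ s < t, _)]
  congr 2
  · refine prod_congr rfl fun r _ => ?_
    rw [(hf t r).1.bit2_apply (hf t r).2, add_comm (bit2 n _), add_assoc, CharTwo.add_self_eq_zero,
      add_zero]
  · exact prod_congr rfl fun s hs => by
      rw [(hg t s (mem_Iio.1 hs)).1.bit2_apply (hg t s (mem_Iio.1 hs)).2, add_comm]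

theorem ergodicM_triangularMap (hf : ∀ t r, Compatible (f t r) ∧ ErgodicZ (f t r))
    (hg : ∀ t s, s < t → Compatible (g t s) ∧ MeasurePreservingZ (g t s)) :
    ErgodicM m (triangularMap f g) := by
  intro n
  induction n with
  | zero => exact fun a b => ⟨0, Subsingleton.elim (α := Fin m → ZMod 1) _ _⟩
  | succ n ih =>
    have hF (t : Fin m) : ∑ a : Fin m → ZMod (2 ^ n), ∏ r, bit2 n (f t r (a r).val) = 1 := by
      rw [← Fintype.prod_sum fun r (b : ZMod (2 ^ n)) => bit2 n (f t r b.val)]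
      exact prod_eq_one fun r _ => (hf t r).1.sum_bit2_eq_one ((hf t r).2 n) ((hf t r).2 (n + 1))
    refine (ih.isSingleCycle_triangularSkew _ _ hF).of_semiconj (fun x y h => funext fun i => ?_)
      (semiconj_splitLastDigit_triangularMap (fun t r => ⟨(hf t r).1, ((hf t r).2 _).injective⟩)
        fun t s hst => ⟨(hg t s hst).1, ((hg t s hst).2 _).1⟩)
    simp only [Prod.mk.injEq] at h
    exact splitLastDigit_bijective.1 (Prod.ext (congrFun h.1 i) (congrFun h.2 i))

end TriangularMap

theorem multivariate_ergodic_construction_general (m : ℕ)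
    (f g : Fin m → Fin m → ℤ_[2] → ℤ_[2])
    (hf : ∀ j s : Fin m, Compatible (f j s) ∧ ErgodicZ (f j s))
    (hg : ∀ j s : Fin m, s < j → Compatible (g j s) ∧ MeasurePreservingZ (g j s)) :
    CompatibleM m (fun x t => xor2 (x t)
        (and2 (andL (((List.finRange m).filter (fun s => s < t)).map (fun s => g t s (x s))))
              (andL ((List.finRange m).map (fun r => xor2 (f t r (x r)) (x r)))))) ∧
    ErgodicM m (fun x t => xor2 (x t)
        (and2 (andL (((List.finRange m).filter (fun s => s < t)).map (fun s => g t s (x s))))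
              (andL ((List.finRange m).map (fun r => xor2 (f t r (x r)) (x r)))))) :=
  ⟨compatibleM_triangularMap (fun t r => (hf t r).1) (fun t s hst => (hg t s hst).1),
    ergodicM_triangularMap hf hg⟩

/-- the `m`-variate map with coordinates
`h^t(x) = x^t ⊕ ((⋀_{s<t} g^t_s(x^s)) ∧ (⋀_{r<m} (f^t_r(x^r) ⊕ x^r)))`,
built from compatible ergodic `f^t_r` and compatible measure-preserving `g^t_s`
(`s < t`), is compatible and ergodic: for every `n` it induces a single-cycle
permutation of `(ZMod 2^n)^m` (of length `2^{mn}`). -/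
theorem multivariate_ergodic_construction (m : ℕ) (hm : 0 < m)
    (f g : Fin m → Fin m → ℤ_[2] → ℤ_[2])
    (hf : ∀ j s : Fin m, Compatible (f j s) ∧ ErgodicZ (f j s))
    (hg : ∀ j s : Fin m, s < j → Compatible (g j s) ∧ MeasurePreservingZ (g j s)) :
    CompatibleM m (fun x t => xor2 (x t)
        (and2 (andL (((List.finRange m).filter (fun s => s < t)).map (fun s => g t s (x s))))
              (andL ((List.finRange m).map (fun r => xor2 (f t r (x r)) (x r)))))) ∧
    ErgodicM m (fun x t => xor2 (x t)
        (and2 (andL (((List.finRange m).filter (fun s => s < t)).map (fun s => g t s (x s))))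
              (andL ((List.finRange m).map (fun r => xor2 (f t r (x r)) (x r)))))) :=
  multivariate_ergodic_construction_general m f g hf hg
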